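/- There exists a fermionic unextendible product basis of cardinality 5 in $\wedge^2 \mathbb{C}^4$: five pairwise orthogonal nonzero decomposable 2-vectors in $\wedge^2 \mathbb{C}^4$ such that no nonzero decomposable 2-vector is orthogonal to all of them. (Since $\dim \wedge^2 \mathbb{C}^4 = 6$ and $5 = 2(4-2)+1$, this is a nontrivial FUPB of minimum possible cardinality.) -/

import Mathlib

open scoped InnerProductSpace

noncomputable section

/-- The `N`-fold tensor power of `ℂ^M`, realized as the Euclidean space with
orthonormal basis indexed by multi-indices `Fin N → Fin M`. -/
abbrev TensorPow (N M : ℕ) : Type := EuclideanSpace ℂ (Fin N → Fin M)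

/-- The wedge (Slater determinant) of a family of `N` vectors in `ℂ^M`:
`|v 0⟩ ∧ ⋯ ∧ |v (N-1)⟩ = ∑ σ, sgn σ • |v σ(0), …, v σ(N-1)⟩`. -/
def wedge {N M : ℕ} (v : Fin N → EuclideanSpace ℂ (Fin M)) : TensorPow N M :=
  WithLp.toLp 2 (fun x => ∑ σ : Equiv.Perm (Fin N), ((Equiv.Perm.sign σ : ℤ) : ℂ) * ∏ k, v (σ k) (x k))

/-- The exterior power `⋀^N ℂ^M`, i.e. the subspace of antisymmetric tensors
in `(ℂ^M)^{⊗N}`. -/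
def exteriorPow (N M : ℕ) : Submodule ℂ (TensorPow N M) where
  carrier := {ψ | ∀ σ : Equiv.Perm (Fin N), ∀ x : Fin N → Fin M,
    ψ (x ∘ σ) = ((Equiv.Perm.sign σ : ℤ) : ℂ) * ψ x}
  add_mem' := by
    intro a b ha hb σ x
    have h1 := ha σ x
    have h2 := hb σ x
    show a (x ∘ σ) + b (x ∘ σ) = ((Equiv.Perm.sign σ : ℤ) : ℂ) * (a x + b x)
    rw [h1, h2]; ring
  zero_mem' := by
    intro σ x
    show (0 : ℂ) = ((Equiv.Perm.sign σ : ℤ) : ℂ) * (0 : ℂ)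
    ring
  smul_mem' := by
    intro c a ha σ x
    have h1 := ha σ x
    show c * a (x ∘ σ) = ((Equiv.Perm.sign σ : ℤ) : ℂ) * (c * a x)
    rw [h1]; ring

/-- A decomposable (Slater determinant) vector in `⋀^N ℂ^M`. -/
def IsSlater {N M : ℕ} (ψ : TensorPow N M) : Prop :=
  ∃ v : Fin N → EuclideanSpace ℂ (Fin M), ψ = wedge v

/-! In Plücker coordinates `p i j = v i * w j - v j * w i` the inner product of two 2-vectors is
`2 ∑_{i<j} conj (p i j) * q i j`, and every `v ∧ w` satisfies the Plücker relation
`p 0 1 * p 2 3 - p 0 2 * p 1 3 + p 0 3 * p 1 2 = 0`. The five 2-vectors `fupb k` are pairwise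
orthogonal and their Plücker vectors span the orthogonal complement of `e₀ ∧ e₃ - e₁ ∧ e₂`. A
decomposable vector orthogonal to all of them therefore has `p 0 1 = p 0 2 = p 1 3 = p 2 3 = 0`
and `p 1 2 = -p 0 3`, and the Plücker relation becomes `-(p 0 3)² = 0`. -/

open ComplexConjugate

section Plucker

variable {M : ℕ}

def plucker (v w : EuclideanSpace ℂ (Fin M)) (i j : Fin M) : ℂ := v i * w j - v j * w i

lemma wedge_apply {N : ℕ} (v : Fin N → EuclideanSpace ℂ (Fin M)) (x : Fin N → Fin M) :
    wedge v x = (Matrix.of fun k l => v k (x l)).det := by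
  rw [Matrix.det_apply']
  rfl

lemma wedge_two_apply (v w : EuclideanSpace ℂ (Fin M)) (x : Fin 2 → Fin M) :
    wedge ![v, w] x = plucker v w (x 0) (x 1) := by
  rw [wedge_apply, Matrix.det_fin_two]
  rfl

lemma sum_fin_two_arrow (f : (Fin 2 → Fin M) → ℂ) : ∑ x, f x = ∑ i, ∑ j, f ![i, j] := by
  rw [← (finTwoArrowEquiv (Fin M)).symm.sum_comp, Fintype.sum_prod_type]
  rfl

lemma inner_wedge_two (a b v w : EuclideanSpace ℂ (Fin M)) :
    ⟪wedge ![a, b], wedge ![v, w]⟫_ℂ = ∑ i, ∑ j, conj (plucker a b i j) * plucker v w i j := by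
  simp only [PiLp.inner_apply, RCLike.inner_apply', wedge_two_apply, sum_fin_two_arrow]
  rfl

lemma wedge_two_eq_zero_iff (v w : EuclideanSpace ℂ (Fin M)) :
    wedge ![v, w] = 0 ↔ ∀ i j, plucker v w i j = 0 := by
  constructor
  · intro h i j
    simpa [wedge_two_apply] using congrArg (fun ψ : TensorPow 2 M => ψ ![i, j]) h
  · intro h
    ext x
    simp [wedge_two_apply, h]

lemma wedge_two_eq_zero_of_plucker_lt {v w : EuclideanSpace ℂ (Fin M)}
    (h : ∀ i j, i < j → plucker v w i j = 0) : wedge ![v, w] = 0 := by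
  refine (wedge_two_eq_zero_iff v w).2 fun i j => ?_
  rcases lt_trichotomy i j with hij | rfl | hij
  · exact h i j hij
  · simp [plucker]
  · rw [show plucker v w i j = -plucker v w j i by unfold plucker; ring, h j i hij, neg_zero]

end Plucker

lemma inner_wedge_two_fin_four (a b v w : EuclideanSpace ℂ (Fin 4)) :
    ⟪wedge ![a, b], wedge ![v, w]⟫_ℂ = 2 *
      (conj (plucker a b 0 1) * plucker v w 0 1 + conj (plucker a b 0 2) * plucker v w 0 2 +
        conj (plucker a b 0 3) * plucker v w 0 3 + conj (plucker a b 1 2) * plucker v w 1 2 +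
        conj (plucker a b 1 3) * plucker v w 1 3 + conj (plucker a b 2 3) * plucker v w 2 3) := by
  simp only [inner_wedge_two, Fin.sum_univ_four, plucker, map_sub, map_mul]
  ring

lemma plucker_relation (v w : EuclideanSpace ℂ (Fin 4)) :
    plucker v w 0 1 * plucker v w 2 3 - plucker v w 0 2 * plucker v w 1 3 +
      plucker v w 0 3 * plucker v w 1 2 = 0 := by
  unfold plucker; ring

def ω : ℂ := (-1 + Real.sqrt 3 * Complex.I) / 2

lemma ω_sq_add_ω_add_one : ω ^ 2 + ω + 1 = 0 := by
  have h3 : (Real.sqrt 3 : ℂ) ^ 2 = 3 := by norm_cast; simp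
  unfold ω
  linear_combination (-1 / 4 : ℂ) * h3 + ((Real.sqrt 3 : ℂ) ^ 2 / 4) * Complex.I_sq

lemma conj_ω : conj ω = -1 - ω := by
  unfold ω
  rw [map_div₀, map_add, map_mul, Complex.conj_I, Complex.conj_ofReal, map_ofNat, map_neg, map_one]
  ring

def fupbLeft : Fin 5 → EuclideanSpace ℂ (Fin 4) :=
  ![!₂[1, 0, -1, ω], !₂[ω, 0, -1, 1], !₂[1, 0, -ω, 1], !₂[1, 0, 0, 0], !₂[0, 1, ω, 0]]

def fupbRight : Fin 5 → EuclideanSpace ℂ (Fin 4) :=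
  ![!₂[0, 1, 1, 1], !₂[0, ω, ω, 1], !₂[0, 1, 1, ω], !₂[0, 1, -1, 0], !₂[0, 0, 0, 1]]

def fupb (k : Fin 5) : TensorPow 2 4 := wedge ![fupbLeft k, fupbRight k]

lemma inner_fupb_eq_zero {k l : Fin 5} (hkl : k ≠ l) : ⟪fupb k, fupb l⟫_ℂ = 0 := by
  have hω := ω_sq_add_ω_add_one
  fin_cases k <;> fin_cases l <;> first | exact absurd rfl hkl | skip
  all_goals
    simp only [fupb, fupbLeft, fupbRight, inner_wedge_two_fin_four, plucker, Fin.isValue,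
      Fin.zero_eta, Fin.mk_one, Fin.reduceFinMk, Matrix.cons_val, map_sub, map_mul, map_neg, map_one, map_zero, conj_ω]
    grind

lemma fupb_ne_zero (k : Fin 5) : fupb k ≠ 0 := by
  have hω : ω ≠ 0 := fun h => by simpa [h] using ω_sq_add_ω_add_one
  rw [fupb, Ne, wedge_two_eq_zero_iff]
  simp only [not_forall]
  fin_cases k
  · exact ⟨0, 1, by simp [plucker, fupbLeft, fupbRight]⟩
  · exact ⟨0, 1, by simp [plucker, fupbLeft, fupbRight, hω]⟩
  · exact ⟨0, 1, by simp [plucker, fupbLeft, fupbRight]⟩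
  · exact ⟨0, 1, by simp [plucker, fupbLeft, fupbRight]⟩
  · exact ⟨1, 3, by simp [plucker, fupbLeft, fupbRight]⟩

lemma wedge_eq_zero_of_forall_inner_fupb_eq_zero {v w : EuclideanSpace ℂ (Fin 4)}
    (h : ∀ k, ⟪fupb k, wedge ![v, w]⟫_ℂ = 0) : wedge ![v, w] = 0 := by
  have hω := ω_sq_add_ω_add_one
  have hrel := plucker_relation v w
  simp only [fupb, inner_wedge_two_fin_four] at h
  set P := plucker v w
  obtain ⟨h0, h1, h2, h3, h4⟩ : _ ∧ _ ∧ _ ∧ _ ∧ _ := ⟨h 0, h 1, h 2, h 3, h 4⟩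
  simp only [fupbLeft, fupbRight, plucker, Fin.isValue, Matrix.cons_val, map_sub, map_mul, map_neg,
    map_one, map_zero, conj_ω] at h0 h1 h2 h3 h4
  obtain ⟨h01, h02, h13, h23, hsum⟩ :
      P 0 1 = 0 ∧ P 0 2 = 0 ∧ P 1 3 = 0 ∧ P 2 3 = 0 ∧ P 0 3 + P 1 2 = 0 := by
    refine ⟨?_, ?_, ?_, ?_, ?_⟩ <;> grind
  have h03 : P 0 3 = 0 := pow_eq_zero_iff two_ne_zero |>.1 <| by
    linear_combination P 0 3 * hsum - hrel + P 2 3 * h01 - P 1 3 * h02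
  have h12 : P 1 2 = 0 := by linear_combination hsum - h03
  refine wedge_two_eq_zero_of_plucker_lt fun i j hij => ?_
  fin_cases i <;> fin_cases j <;> first | exact absurd hij (by decide) | assumption

/-- There exists a fermionic unextendible product basis of cardinality 5 in
`⋀² ℂ⁴`: five pairwise orthogonal nonzero decomposable 2-vectors such that no
nonzero decomposable 2-vector is orthogonal to all of them. -/
theorem exists_FUPB_card_five_in_wedge2_C4 :
    ∃ ψ : Fin 5 → TensorPow 2 4,
      (∀ i, IsSlater (ψ i)) ∧ (∀ i, ψ i ≠ 0) ∧
      (∀ i j, i ≠ j → ⟪ψ i, ψ j⟫_ℂ = 0) ∧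
      (∀ v w : EuclideanSpace ℂ (Fin 4),
        (∀ i, ⟪ψ i, wedge ![v, w]⟫_ℂ = 0) → wedge ![v, w] = 0) :=
  ⟨fupb, fun _ => ⟨_, rfl⟩, fupb_ne_zero, fun _ _ => inner_fupb_eq_zero,
    fun _ _ => wedge_eq_zero_of_forall_inner_fupb_eq_zero⟩
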